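/- arXiv:2507.17895 — 2 statements merged into one kernel-verified Lean document; each statement's English description precedes it below -/
import Mathlib

section
/- Let 0 ≤ ε ≤ 1 and 0 ≤ δ ≤ 1/2, and let A, B be real-valued random variables such that for every measurable set S, e^{-ε}·P(A ∈ S) − δ ≤ P(B ∈ S) ≤ e^{ε}·P(A ∈ S) + δ. Then |E[A − B]| ≤ 2ε·E[|A|] + 2√(δ·E[A² + B²]). -/
/-!
Truncate both variables at level `T`. The truncated means are integrals over `t ∈ (0, T]` of the
tail probabilities `P(± X ≥ t)` (layer cake), and the hypothesis bounds the difference of these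
tail probabilities for `A` and `B` by `2 ε P(± A ≥ t) + δ`; integrating gives
`2 ε E|A| + 2 δ T`. The truncation error is at most `E[X²] / (4 T)` for each variable, since
`(|x| - T)⁺ ≤ x² / (4 T)`. Optimising over `T` (up to a perturbation of `δ` and `E[A² + B²]`
away from `0`) gives `2 √(δ E[A² + B²])`, with room to spare.
-/

open MeasureTheory ProbabilityTheory Real Set

lemma abs_sub_le_two_mul_add_of_exp_bounds {ε δ p q : ℝ} (hε0 : 0 ≤ ε) (hε1 : ε ≤ 1)
    (hp : 0 ≤ p) (h : exp (-ε) * p - δ ≤ q ∧ q ≤ exp ε * p + δ) :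
    |p - q| ≤ 2 * ε * p + δ := by
  have hup := (abs_le.1 (abs_exp_sub_one_le (x := ε) (by rwa [abs_of_nonneg hε0]))).2
  have hlow := (abs_le.1 (abs_exp_sub_one_le (x := -ε) (by rwa [abs_neg, abs_of_nonneg hε0]))).1
  rw [abs_of_nonneg hε0] at hup
  rw [abs_neg, abs_of_nonneg hε0] at hlow
  rw [abs_sub_le_iff]
  constructor <;> nlinarith [h.1, h.2]

lemma le_add_two_sqrt_mul_of_forall_pos {x a δ E : ℝ} (hδ : 0 ≤ δ) (hE : 0 ≤ E)
    (h : ∀ T > 0, x ≤ a + 2 * δ * T + E / (4 * T)) : x ≤ a + 2 * √(δ * E) := by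
  have hη : ∀ η > 0, x ≤ a + 2 * √((δ + η) * (E + η)) := by
    intro η hη
    set r := √((δ + η) * (E + η))
    have hr : 0 < r := sqrt_pos.2 (by positivity)
    have hr2 : r ^ 2 = (δ + η) * (E + η) := sq_sqrt (by positivity)
    -- at `T = r / (2 (δ + η))`, `2 (δ + η) T = r` and `(E + η) / (4 T) = r / 2`
    have hT : 0 < r / (2 * (δ + η)) := by positivity
    calc x ≤ a + 2 * δ * (r / (2 * (δ + η))) + E / (4 * (r / (2 * (δ + η)))) := h _ hT
      _ ≤ a + 2 * (δ + η) * (r / (2 * (δ + η))) + (E + η) / (4 * (r / (2 * (δ + η)))) := by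
          gcongr <;> linarith
      _ = a + 3 / 2 * r := by field_simp; linear_combination -4 * hr2
      _ ≤ a + 2 * r := by linarith
  have hlim : Filter.Tendsto (fun η => a + 2 * √((δ + η) * (E + η))) (nhdsWithin 0 (Ioi 0))
      (nhds (a + 2 * √(δ * E))) := by
    apply tendsto_nhdsWithin_of_tendsto_nhds
    have : Continuous (fun η : ℝ => a + 2 * √((δ + η) * (E + η))) := by fun_prop
    simpa using this.tendsto 0
  exact ge_of_tendsto hlim (eventually_nhdsWithin_of_forall hη)

lemma abs_sub_truncate_le_sq_div {T : ℝ} (hT : 0 < T) (x : ℝ) :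
    |x - (min x⁺ T - min x⁻ T)| ≤ x ^ 2 / (4 * T) := by
  rw [le_div_iff₀ (by positivity)]
  rcases le_total 0 x with hx | hx
  · rw [posPart_eq_self.2 hx, negPart_eq_zero.2 hx, min_eq_left hT.le, sub_zero]
    rcases le_total x T with hxT | hxT
    · rw [min_eq_left hxT, sub_self, abs_zero, zero_mul]; positivity
    · rw [min_eq_right hxT, abs_of_nonneg (by linarith)]; nlinarith [sq_nonneg (x - 2 * T)]
  · rw [posPart_eq_zero.2 hx, negPart_eq_neg.2 hx, min_eq_left hT.le, zero_sub]
    rcases le_total (-x) T with hxT | hxT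
    · rw [min_eq_left hxT, sub_neg_eq_add, add_neg_cancel, abs_zero, zero_mul]; positivity
    · rw [min_eq_right hxT, abs_of_nonpos (by linarith)]; nlinarith [sq_nonneg (x + 2 * T)]

section

variable {Ω : Type*} [MeasurableSpace Ω] {μ : Measure Ω} [IsFiniteMeasure μ]

lemma integrable_min_posPart {X : Ω → ℝ} (hX : Integrable X μ) (T : ℝ) :
    Integrable (fun ω => min (X ω)⁺ T) μ :=
  hX.pos_part.inf (integrable_const T)

lemma integral_min_posPart_eq_integral_measureReal_le {X : Ω → ℝ} (hX : AEMeasurable X μ)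
    {T : ℝ} (hT : 0 ≤ T) :
    ∫ ω, min (X ω)⁺ T ∂μ = ∫ t in Ioc 0 T, μ.real {ω | t ≤ X ω} := by
  have hint : Integrable (fun ω => min (X ω)⁺ T) μ :=
    Integrable.mono' (integrable_const T) (by fun_prop) (Filter.Eventually.of_forall fun ω => by
      rw [Real.norm_eq_abs, abs_of_nonneg (le_min (posPart_nonneg _) hT)]; exact min_le_right _ _)
  rw [hint.integral_eq_integral_Ioc_meas_le
    (Filter.Eventually.of_forall fun ω => le_min (posPart_nonneg _) hT)
    (Filter.Eventually.of_forall fun ω => min_le_right _ _)]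
  refine setIntegral_congr_fun measurableSet_Ioc fun t ht => ?_
  simp only [le_min_iff, ht.2, and_true, posPart_def, le_sup_iff, ht.1.not_ge, or_false]

lemma integrableOn_measureReal_le (X : Ω → ℝ) (a b : ℝ) :
    IntegrableOn (fun t => μ.real {ω | t ≤ X ω}) (Ioc a b) :=
  have hanti : Antitone fun t => μ.real {ω | t ≤ X ω} :=
    fun _ _ hst => measureReal_mono fun _ hω => hst.trans hω
  ((hanti.antitoneOn _).integrableOn_isCompact isCompact_Icc).mono_set Ioc_subset_Icc_self

lemma abs_integral_min_posPart_sub_le {X Y : Ω → ℝ} (hX : AEMeasurable X μ)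
    (hY : AEMeasurable Y μ) {c δ T : ℝ} (hT : 0 ≤ T)
    (h : ∀ t, |μ.real {ω | t ≤ X ω} - μ.real {ω | t ≤ Y ω}| ≤ c * μ.real {ω | t ≤ X ω} + δ) :
    |∫ ω, min (X ω)⁺ T ∂μ - ∫ ω, min (Y ω)⁺ T ∂μ| ≤ c * ∫ ω, min (X ω)⁺ T ∂μ + δ * T := by
  have hFX := integrableOn_measureReal_le (μ := μ) X 0 T
  have hFY := integrableOn_measureReal_le (μ := μ) Y 0 T
  have hδ : IntegrableOn (fun _ => δ) (Ioc 0 T) := integrableOn_const measure_Ioc_lt_top.ne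
  rw [integral_min_posPart_eq_integral_measureReal_le hX hT,
    integral_min_posPart_eq_integral_measureReal_le hY hT, ← integral_sub hFX hFY]
  calc _ ≤ ∫ t in Ioc 0 T, |μ.real {ω | t ≤ X ω} - μ.real {ω | t ≤ Y ω}| :=
        abs_integral_le_integral_abs
    _ ≤ ∫ t in Ioc 0 T, (c * μ.real {ω | t ≤ X ω} + δ) :=
        setIntegral_mono_on (hFX.sub hFY).abs ((hFX.const_mul c).add hδ)
          measurableSet_Ioc fun t _ => h t
    _ = c * (∫ t in Ioc 0 T, μ.real {ω | t ≤ X ω}) + δ * T := by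
        rw [integral_add (hFX.const_mul c) hδ, integral_const_mul, setIntegral_const]
        simp [hT, mul_comm]

lemma abs_integral_sub_integral_truncate_le {X : Ω → ℝ} (hX : MemLp X 2 μ) {T : ℝ}
    (hT : 0 < T) :
    |∫ ω, X ω ∂μ - ∫ ω, (min (X ω)⁺ T - min (X ω)⁻ T) ∂μ| ≤ (∫ ω, X ω ^ 2 ∂μ) / (4 * T) := by
  have hXi := hX.integrable one_le_two
  have htr : Integrable (fun ω => min (X ω)⁺ T - min (X ω)⁻ T) μ :=
    (integrable_min_posPart hXi T).sub (integrable_min_posPart hXi.neg T)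
  rw [← integral_sub hXi htr, ← integral_div]
  exact abs_integral_le_integral_abs.trans <| integral_mono (hXi.sub htr).abs
    (hX.integrable_sq.div_const _) fun ω => abs_sub_truncate_le_sq_div hT (X ω)

lemma abs_integral_sub_le_of_abs_measureReal_preimage_sub_le {A B : Ω → ℝ} (hA : MemLp A 2 μ)
    (hB : MemLp B 2 μ) {c δ : ℝ} (hc : 0 ≤ c)
    (h : ∀ S, MeasurableSet S →
      |μ.real (A ⁻¹' S) - μ.real (B ⁻¹' S)| ≤ c * μ.real (A ⁻¹' S) + δ)
    {T : ℝ} (hT : 0 < T) :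
    |∫ ω, (A ω - B ω) ∂μ|
      ≤ c * ∫ ω, |A ω| ∂μ + 2 * δ * T + (∫ ω, (A ω ^ 2 + B ω ^ 2) ∂μ) / (4 * T) := by
  have hAi := hA.integrable one_le_two
  have hBi := hB.integrable one_le_two
  have hAp := integrable_min_posPart hAi T
  have hBp := integrable_min_posPart hBi T
  have hAn : Integrable (fun ω => min (A ω)⁻ T) μ := integrable_min_posPart hAi.neg T
  have hBn : Integrable (fun ω => min (B ω)⁻ T) μ := integrable_min_posPart hBi.neg T
  have htailA := abs_integral_sub_integral_truncate_le hA hT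
  have htailB := abs_integral_sub_integral_truncate_le hB hT
  rw [integral_sub hAp hAn] at htailA
  rw [integral_sub hBp hBn] at htailB
  have hpos := abs_integral_min_posPart_sub_le hA.aestronglyMeasurable.aemeasurable
    hB.aestronglyMeasurable.aemeasurable hT.le fun t => h _ measurableSet_Ici
  -- `(-x)⁺ = x⁻`, and `{ω | t ≤ -A ω}` is the preimage under `A` of a measurable set
  have hneg : |∫ ω, min (A ω)⁻ T ∂μ - ∫ ω, min (B ω)⁻ T ∂μ|
      ≤ c * ∫ ω, min (A ω)⁻ T ∂μ + δ * T :=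
    abs_integral_min_posPart_sub_le hA.neg.aestronglyMeasurable.aemeasurable
      hB.neg.aestronglyMeasurable.aemeasurable hT.le
      fun t => h _ (measurable_neg measurableSet_Ici)
  have habs : ∫ ω, min (A ω)⁺ T ∂μ + ∫ ω, min (A ω)⁻ T ∂μ ≤ ∫ ω, |A ω| ∂μ := by
    rw [← integral_add hAp hAn]
    refine integral_mono (hAp.add hAn) hAi.abs fun ω => ?_
    rw [← posPart_add_negPart]
    exact add_le_add (min_le_left _ _) (min_le_left _ _)
  rw [integral_sub hAi hBi, integral_add hA.integrable_sq hB.integrable_sq, add_div]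
  have hc' := mul_le_mul_of_nonneg_left habs hc
  rw [abs_le] at htailA htailB hpos hneg ⊢
  constructor <;> linarith

end

theorem dp_indistinguishable_expectation_bound_general
    {Ω : Type*} [MeasurableSpace Ω] (P : Measure Ω) [IsProbabilityMeasure P]
    (ε δ : ℝ) (hε0 : 0 ≤ ε) (hε1 : ε ≤ 1) (hδ0 : 0 ≤ δ)
    (A B : Ω → ℝ) (hA : MemLp A 2 P) (hB : MemLp B 2 P)
    (hind : ∀ S : Set ℝ, MeasurableSet S →
      Real.exp (-ε) * (P (A ⁻¹' S)).toReal - δ ≤ (P (B ⁻¹' S)).toReal ∧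
      (P (B ⁻¹' S)).toReal ≤ Real.exp ε * (P (A ⁻¹' S)).toReal + δ) :
    |∫ ω, (A ω - B ω) ∂P|
      ≤ 2 * ε * ∫ ω, |A ω| ∂P
        + 2 * Real.sqrt (δ * ∫ ω, (A ω ^ 2 + B ω ^ 2) ∂P) := by
  have hclose : ∀ S, MeasurableSet S →
      |P.real (A ⁻¹' S) - P.real (B ⁻¹' S)| ≤ 2 * ε * P.real (A ⁻¹' S) + δ :=
    fun S hS => abs_sub_le_two_mul_add_of_exp_bounds hε0 hε1 measureReal_nonneg (hind S hS)
  exact le_add_two_sqrt_mul_of_forall_pos hδ0 (integral_nonneg fun ω => by positivity)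
    fun T hT => abs_integral_sub_le_of_abs_measureReal_preimage_sub_le hA hB (by positivity)
      hclose hT

/-- indistinguishability implies closeness of expectations:
if `0 ≤ ε ≤ 1`, `0 ≤ δ ≤ 1/2`, and the real random variables `A, B` (with finite second
moments) satisfy, for every measurable `S ⊆ ℝ`,
`e^{-ε} P(A ∈ S) − δ ≤ P(B ∈ S) ≤ e^{ε} P(A ∈ S) + δ`, then
`|E[A − B]| ≤ 2 ε E[|A|] + 2 √(δ E[A² + B²])`. -/
theorem dp_indistinguishable_expectation_bound
    {Ω : Type*} [MeasurableSpace Ω] (P : Measure Ω) [IsProbabilityMeasure P]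
    (ε δ : ℝ) (hε0 : 0 ≤ ε) (hε1 : ε ≤ 1) (hδ0 : 0 ≤ δ) (hδ1 : δ ≤ 1 / 2)
    (A B : Ω → ℝ) (hA : MemLp A 2 P) (hB : MemLp B 2 P)
    (hind : ∀ S : Set ℝ, MeasurableSet S →
      Real.exp (-ε) * (P (A ⁻¹' S)).toReal - δ ≤ (P (B ⁻¹' S)).toReal ∧
      (P (B ⁻¹' S)).toReal ≤ Real.exp ε * (P (A ⁻¹' S)).toReal + δ) :
    |∫ ω, (A ω - B ω) ∂P|
      ≤ 2 * ε * ∫ ω, |A ω| ∂P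
        + 2 * Real.sqrt (δ * ∫ ω, (A ω ^ 2 + B ω ^ 2) ∂P) :=
  dp_indistinguishable_expectation_bound_general P ε δ hε0 hε1 hδ0 A B hA hB hind
end

section
/- Let X ∈ ℝ^{m×d} be fixed with λ_min(XᵀX) ≥ t₁ > 0 and λ_max(XᵀX) ≤ t₂, and let Σ = (τ²/d)XXᵀ + σ²I_m. Then Tr(XᵀΣ⁻¹X) = (1/σ²)Tr(XᵀX) − (1/σ⁴)Tr(XᵀX·((d/τ²)I_d + (1/σ²)XᵀX)⁻¹·XᵀX), and the subtracted term satisfies (1/σ⁴)Tr(XᵀX·((d/τ²)I_d + (1/σ²)XᵀX)⁻¹·XᵀX) ≥ (1/σ⁴)·d·t₁²/((d/τ²) + t₂/σ²). -/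
open Matrix

lemma symm_dot {n : ℕ} (B : Matrix (Fin n) (Fin n) ℝ) (hs : Bᵀ = B) (x y : Fin n → ℝ) :
    x ⬝ᵥ B *ᵥ y = y ⬝ᵥ B *ᵥ x := by
  rw [dotProduct_mulVec x B y, ← mulVec_transpose, hs, dotProduct_comm]

lemma cs_psd {n : ℕ} (B : Matrix (Fin n) (Fin n) ℝ) (hB : B.PosSemidef) (x y : Fin n → ℝ) :
    (x ⬝ᵥ B *ᵥ y) ^ 2 ≤ (x ⬝ᵥ B *ᵥ x) * (y ⬝ᵥ B *ᵥ y) := by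
  have hs : Bᵀ = B := hB.1
  have key : ∀ t : ℝ, 0 ≤ (y ⬝ᵥ B *ᵥ y) * (t * t) + (2 * (x ⬝ᵥ B *ᵥ y)) * t + x ⬝ᵥ B *ᵥ x := by
    intro t
    have h0 : 0 ≤ (x + t • y) ⬝ᵥ B *ᵥ (x + t • y) := by
      have := hB.dotProduct_mulVec_nonneg (x + t • y)
      simpa using this
    have hexp : (x + t • y) ⬝ᵥ B *ᵥ (x + t • y)
        = (y ⬝ᵥ B *ᵥ y) * (t * t) + (2 * (x ⬝ᵥ B *ᵥ y)) * t + x ⬝ᵥ B *ᵥ x := by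
      rw [mulVec_add, dotProduct_add, add_dotProduct, add_dotProduct, mulVec_smul,
        dotProduct_smul, smul_dotProduct, smul_dotProduct, dotProduct_smul,
        symm_dot B hs y x]
      simp [smul_eq_mul]; ring
    linarith [hexp ▸ h0]
  have hd := discrim_le_zero key
  rw [discrim] at hd
  nlinarith [hd]

lemma inv_quad_lower {n : ℕ} (B : Matrix (Fin n) (Fin n) ℝ) (hB : B.PosDef) (β : ℝ)
    (hβ : 0 < β) (hub : ∀ v : Fin n → ℝ, v ⬝ᵥ B *ᵥ v ≤ β * (v ⬝ᵥ v)) (v : Fin n → ℝ) :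
    (v ⬝ᵥ v) / β ≤ v ⬝ᵥ B⁻¹ *ᵥ v := by
  have hs : Bᵀ = B := hB.1
  have hBi : B * B⁻¹ = 1 := mul_nonsing_inv _ ((isUnit_iff_isUnit_det _).1 hB.isUnit)
  set w : Fin n → ℝ := B⁻¹ *ᵥ v with hw
  have hBw : B *ᵥ w = v := by
    rw [hw, mulVec_mulVec, hBi, one_mulVec]
  have h1 : w ⬝ᵥ B *ᵥ v = v ⬝ᵥ v := by
    rw [symm_dot B hs w v, ← hBw]
  have h2 : w ⬝ᵥ B *ᵥ w = v ⬝ᵥ w := by rw [hBw, dotProduct_comm]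
  have h3 : v ⬝ᵥ B⁻¹ *ᵥ v = v ⬝ᵥ w := rfl
  have hQ : 0 ≤ v ⬝ᵥ w := by
    have := hB.posSemidef.dotProduct_mulVec_nonneg w
    rw [← h2]
    simpa using this
  have hcs := cs_psd B hB.posSemidef w v
  rw [h1, h2] at hcs
  have hub' := hub v
  have hvv : 0 ≤ v ⬝ᵥ v := Finset.sum_nonneg fun i _ => mul_self_nonneg _
  rw [h3, div_le_iff₀ hβ]
  by_cases hp0 : v ⬝ᵥ v = 0
  · rw [hp0]; exact mul_nonneg hQ hβ.le
  · have hppos : 0 < v ⬝ᵥ v := lt_of_le_of_ne hvv (Ne.symm hp0)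
    have hchain : (v ⬝ᵥ v) ^ 2 ≤ (v ⬝ᵥ w) * (β * (v ⬝ᵥ v)) :=
      le_trans hcs (mul_le_mul_of_nonneg_left hub' hQ)
    nlinarith [hchain, hppos]

set_option maxHeartbeats 1000000 in
/-- for `X ∈ ℝ^{m×d}` with `t₁ ≤ λ_min(XᵀX)` and `λ_max(XᵀX) ≤ t₂`
(expressed via the quadratic form of `XᵀX`), and `Σ = (τ²/d) X Xᵀ + σ² I`, the trace
satisfies `Tr(Xᵀ Σ⁻¹ X) = (1/σ²) Tr(XᵀX) − (1/σ⁴) Tr(XᵀX ((d/τ²)I + (1/σ²)XᵀX)⁻¹ XᵀX)`,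
and the subtracted term is at least `(1/σ⁴) d t₁² / (d/τ² + t₂/σ²)`. -/
theorem trace_gls_information_bound (m d : ℕ) (hd : 0 < d) (τ σ t₁ t₂ : ℝ)
    (hτ : 0 < τ) (hσ : 0 < σ) (ht₁ : 0 < t₁)
    (X : Matrix (Fin m) (Fin d) ℝ)
    (hmin : ∀ u : Fin d → ℝ, t₁ * (u ⬝ᵥ u) ≤ u ⬝ᵥ ((Xᵀ * X) *ᵥ u))
    (hmax : ∀ u : Fin d → ℝ, u ⬝ᵥ ((Xᵀ * X) *ᵥ u) ≤ t₂ * (u ⬝ᵥ u)) :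
    (Xᵀ * ((τ ^ 2 / (d : ℝ)) • (X * Xᵀ) + σ ^ 2 • (1 : Matrix (Fin m) (Fin m) ℝ))⁻¹
        * X).trace
      = (1 / σ ^ 2) * (Xᵀ * X).trace
        - (1 / σ ^ 4) * ((Xᵀ * X) *
            (((d : ℝ) / τ ^ 2) • (1 : Matrix (Fin d) (Fin d) ℝ)
              + (1 / σ ^ 2) • (Xᵀ * X))⁻¹ * (Xᵀ * X)).trace ∧
    (1 / σ ^ 4) * ((d : ℝ) * t₁ ^ 2 / ((d : ℝ) / τ ^ 2 + t₂ / σ ^ 2))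
      ≤ (1 / σ ^ 4) * ((Xᵀ * X) *
            (((d : ℝ) / τ ^ 2) • (1 : Matrix (Fin d) (Fin d) ℝ)
              + (1 / σ ^ 2) • (Xᵀ * X))⁻¹ * (Xᵀ * X)).trace := by
  have hd0 : (0:ℝ) < (d : ℝ) := by exact_mod_cast hd
  have hτ2 : (0:ℝ) < τ ^ 2 := by positivity
  have hσ2 : (0:ℝ) < σ ^ 2 := by positivity
  have hσ4 : (0:ℝ) < σ ^ 4 := by positivity
  set A : Matrix (Fin d) (Fin d) ℝ := Xᵀ * X with hA
  set B : Matrix (Fin d) (Fin d) ℝ :=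
    ((d : ℝ) / τ ^ 2) • (1 : Matrix (Fin d) (Fin d) ℝ) + (1 / σ ^ 2) • A with hB
  have hApsd : A.PosSemidef := by
    rw [hA, ← conjTranspose_eq_transpose_of_trivial]
    exact posSemidef_conjTranspose_mul_self X
  have hAt : Aᵀ = A := by
    rw [← conjTranspose_eq_transpose_of_trivial]
    exact hApsd.1
  have hBpd : B.PosDef := by
    have h1 : (((d : ℝ) / τ ^ 2) • (1 : Matrix (Fin d) (Fin d) ℝ)).PosDef := by
      refine PosDef.of_dotProduct_mulVec_pos ?_ (fun x hx => ?_)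
      · show _ = _
        simp
      · rw [smul_mulVec, one_mulVec, dotProduct_smul, smul_eq_mul]
        exact mul_pos (div_pos hd0 hτ2) (dotProduct_star_self_pos_iff.mpr hx)
    have h2 : ((1 / σ ^ 2) • A).PosSemidef := by
      refine PosSemidef.of_dotProduct_mulVec_nonneg ?_ (fun x => ?_)
      · show _ = _
        simp [conjTranspose_smul, hApsd.1.eq, hAt]
      · rw [smul_mulVec, dotProduct_smul, smul_eq_mul]
        exact mul_nonneg (by positivity) (hApsd.dotProduct_mulVec_nonneg x)
    exact h1.add_posSemidef h2
  have hBiv : B * B⁻¹ = 1 :=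
    mul_nonsing_inv _ ((isUnit_iff_isUnit_det _).1 hBpd.isUnit)
  -- Woodbury
  set c : ℝ := τ ^ 2 / (d : ℝ) with hc
  set R : Matrix (Fin m) (Fin m) ℝ := X * B⁻¹ * Xᵀ with hR
  have hscal : ((c / σ ^ 2) • B)
      = (1 / σ ^ 2) • (1 : Matrix (Fin d) (Fin d) ℝ) + (c / σ ^ 4) • A := by
    rw [hB, smul_add, smul_smul, smul_smul]
    congr 2
    · rw [hc]; field_simp
    · rw [hc]; field_simp
  have e1 : X * (((c / σ ^ 2) • B) * B⁻¹) * Xᵀ = (c / σ ^ 2) • (X * Xᵀ) := by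
    rw [Matrix.smul_mul, hBiv, Matrix.mul_smul, Matrix.mul_one, Matrix.smul_mul]
  have e2 : X * (((c / σ ^ 2) • B) * B⁻¹) * Xᵀ
      = (1 / σ ^ 2) • R + (c / σ ^ 4) • (X * Xᵀ * R) := by
    rw [hscal, Matrix.add_mul, Matrix.mul_add, Matrix.add_mul, hR, hA]
    simp only [Matrix.smul_mul, Matrix.mul_smul, Matrix.one_mul, Matrix.mul_assoc]
  have e3 : (1 / σ ^ 2) • R + (c / σ ^ 4) • (X * Xᵀ * R) = (c / σ ^ 2) • (X * Xᵀ) :=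
    e2.symm.trans e1
  have hwood : (c • (X * Xᵀ) + σ ^ 2 • (1 : Matrix (Fin m) (Fin m) ℝ)) *
      ((1 / σ ^ 2) • (1 : Matrix (Fin m) (Fin m) ℝ) - (1 / σ ^ 4) • R) = 1 := by
    have expand : (c • (X * Xᵀ) + σ ^ 2 • (1 : Matrix (Fin m) (Fin m) ℝ)) *
        ((1 / σ ^ 2) • (1 : Matrix (Fin m) (Fin m) ℝ) - (1 / σ ^ 4) • R)
        = (c * (1 / σ ^ 2)) • (X * Xᵀ) + (σ ^ 2 * (1 / σ ^ 2)) • (1 : Matrix (Fin m) (Fin m) ℝ)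
          - ((c * (1 / σ ^ 4)) • (X * Xᵀ * R) + (σ ^ 2 * (1 / σ ^ 4)) • R) := by
      simp only [Matrix.add_mul, Matrix.mul_sub, Matrix.smul_mul, Matrix.mul_smul,
        Matrix.mul_one, Matrix.one_mul, smul_smul, smul_add]
      module
    rw [expand]
    have s1 : σ ^ 2 * (1 / σ ^ 2) = 1 := by field_simp
    have s2 : σ ^ 2 * (1 / σ ^ 4) = 1 / σ ^ 2 := by field_simp
    have s3 : c * (1 / σ ^ 4) = c / σ ^ 4 := by ring
    have s4 : c * (1 / σ ^ 2) = c / σ ^ 2 := by ring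
    rw [s1, s2, s3, s4, one_smul, add_comm ((c / σ ^ 4) • (X * Xᵀ * R)), e3]
    abel
  have hinv : (c • (X * Xᵀ) + σ ^ 2 • (1 : Matrix (Fin m) (Fin m) ℝ))⁻¹
      = (1 / σ ^ 2) • (1 : Matrix (Fin m) (Fin m) ℝ) - (1 / σ ^ 4) • R :=
    inv_eq_right_inv hwood
  have htr_mat : Xᵀ * ((1 / σ ^ 2) • (1 : Matrix (Fin m) (Fin m) ℝ) - (1 / σ ^ 4) • R) * X
      = (1 / σ ^ 2) • A - (1 / σ ^ 4) • (A * B⁻¹ * A) := by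
    rw [hR, hA]
    simp only [Matrix.mul_sub, Matrix.sub_mul, Matrix.mul_smul, Matrix.smul_mul,
      Matrix.mul_one, Matrix.mul_assoc]
  have traceEq : (Xᵀ * (c • (X * Xᵀ) + σ ^ 2 • (1 : Matrix (Fin m) (Fin m) ℝ))⁻¹ * X).trace
      = (1 / σ ^ 2) * A.trace - (1 / σ ^ 4) * (A * B⁻¹ * A).trace := by
    rw [hinv, htr_mat, trace_sub, trace_smul, trace_smul, smul_eq_mul, smul_eq_mul]
  -- symmetric entries of A
  have hAs : ∀ p q : Fin d, A p q = A q p := by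
    intro p q
    conv_lhs => rw [← hApsd.1.eq]
    simp [conjTranspose_apply]
  -- bound part
  set β : ℝ := (d : ℝ) / τ ^ 2 + t₂ / σ ^ 2 with hβdef
  have hAii : ∀ i : Fin d, t₁ ≤ A i i := by
    intro i
    have h := hmin (Pi.single i 1)
    simpa [single_dotProduct, mulVec_single] using h
  have hAiit : ∀ i : Fin d, A i i ≤ t₂ := by
    intro i
    have h := hmax (Pi.single i 1)
    simpa [single_dotProduct, mulVec_single] using h
  have ht₂ : 0 < t₂ := lt_of_lt_of_le ht₁ (le_trans (hAii ⟨0, hd⟩) (hAiit ⟨0, hd⟩))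
  have hβ : 0 < β := by rw [hβdef]; positivity
  have hub : ∀ v : Fin d → ℝ, v ⬝ᵥ B *ᵥ v ≤ β * (v ⬝ᵥ v) := by
    intro v
    have hm := hmax v
    have hvv : 0 ≤ v ⬝ᵥ v := Finset.sum_nonneg fun i _ => mul_self_nonneg _
    rw [hB, add_mulVec, smul_mulVec, smul_mulVec, one_mulVec, dotProduct_add,
      dotProduct_smul, dotProduct_smul, smul_eq_mul, smul_eq_mul, hβdef]
    have h2 : (1 / σ ^ 2) * (v ⬝ᵥ A *ᵥ v) ≤ (1 / σ ^ 2) * (t₂ * (v ⬝ᵥ v)) :=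
      mul_le_mul_of_nonneg_left hm (by positivity)
    have h3 : ((d : ℝ) / τ ^ 2 + t₂ / σ ^ 2) * (v ⬝ᵥ v)
        = (d : ℝ) / τ ^ 2 * (v ⬝ᵥ v) + 1 / σ ^ 2 * (t₂ * (v ⬝ᵥ v)) := by ring
    linarith [h2, h3]
  have hdiag : ∀ i : Fin d, (A * B⁻¹ * A) i i
      = (fun j => A i j) ⬝ᵥ B⁻¹ *ᵥ (fun j => A i j) := by
    intro i
    simp only [Matrix.mul_apply, Matrix.mulVec, dotProduct, Finset.sum_mul, Finset.mul_sum]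
    rw [Finset.sum_comm]
    refine Finset.sum_congr rfl fun j _ => Finset.sum_congr rfl fun k _ => ?_
    rw [hAs k i]
    ring
  have hQi : ∀ i : Fin d, t₁ ^ 2 / β ≤ (A * B⁻¹ * A) i i := by
    intro i
    rw [hdiag i]
    refine le_trans ?_ (inv_quad_lower B hBpd β hβ hub _)
    rw [div_le_div_iff_of_pos_right hβ]
    calc t₁ ^ 2 ≤ (A i i) ^ 2 := by nlinarith [hAii i, ht₁]
    _ ≤ ∑ j, A i j * A i j := by
        rw [show (A i i) ^ 2 = A i i * A i i by ring]
        exact Finset.single_le_sum (f := fun j => A i j * A i j)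
          (fun j _ => mul_self_nonneg _) (Finset.mem_univ i)
    _ = (fun j => A i j) ⬝ᵥ (fun j => A i j) := rfl
  have htrace_ge : (d : ℝ) * t₁ ^ 2 / β ≤ (A * B⁻¹ * A).trace := by
    have h1 : (d : ℝ) * t₁ ^ 2 / β = ∑ _i : Fin d, t₁ ^ 2 / β := by
      rw [Finset.sum_const, Finset.card_fin, nsmul_eq_mul]
      ring
    rw [h1, Matrix.trace]
    exact Finset.sum_le_sum fun i _ => hQi i
  constructor
  · exact traceEq
  · exact mul_le_mul_of_nonneg_left htrace_ge (by positivity)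
end
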